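/- Let R be a left coherent ring and let M be a finitely presented left R-module that is 𝒜-coherent. Then any direct product of strongly M-𝒜-flat right R-modules is strongly M-𝒜-flat. -/

import Mathlib

open TensorProduct MulOpposite CategoryTheory

universe u

section NC

variable (R : Type u) [Ring R]

/-- The defining relations of the tensor product `N ⊗[R] X` of a right `R`-module `N`
and a left `R`-module `X` over a (possibly noncommutative) ring `R`, inside `N ⊗[ℤ] X`. -/
def ncRel (N : Type u) [AddCommGroup N] [Module Rᵐᵒᵖ N]
    (X : Type u) [AddCommGroup X] [Module R X] : Submodule ℤ (N ⊗[ℤ] X) :=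
  Submodule.span ℤ {z | ∃ (r : R) (n : N) (x : X), z = (op r • n) ⊗ₜ[ℤ] x - n ⊗ₜ[ℤ] (r • x)}

/-- The tensor product `N ⊗[R] X` of a right `R`-module `N` and a left `R`-module `X`
over a (possibly noncommutative) ring `R`. -/
abbrev NCTensor (N : Type u) [AddCommGroup N] [Module Rᵐᵒᵖ N]
    (X : Type u) [AddCommGroup X] [Module R X] : Type u :=
  (N ⊗[ℤ] X) ⧸ ncRel R N X

/-- Functoriality of the tensor product in the left (right-module) variable. -/
noncomputable def ncMapL {N N' : Type u} [AddCommGroup N] [Module Rᵐᵒᵖ N]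
    [AddCommGroup N'] [Module Rᵐᵒᵖ N'] (g : N →ₗ[Rᵐᵒᵖ] N')
    (X : Type u) [AddCommGroup X] [Module R X] :
    NCTensor R N X →ₗ[ℤ] NCTensor R N' X :=
  Submodule.mapQ _ _ (LinearMap.rTensor X g.toAddMonoidHom.toIntLinearMap :
      N ⊗[ℤ] X →ₗ[ℤ] N' ⊗[ℤ] X) (by
    rw [ncRel, Submodule.span_le]
    rintro _ ⟨r, n, x, rfl⟩
    show LinearMap.rTensor X g.toAddMonoidHom.toIntLinearMap
      ((op r • n) ⊗ₜ[ℤ] x - n ⊗ₜ[ℤ] (r • x)) ∈ ncRel R N' X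
    simp only [SetLike.mem_coe, Submodule.mem_comap, map_sub, LinearMap.rTensor_tmul]
    have h : g.toAddMonoidHom.toIntLinearMap (op r • n) =
        op r • g.toAddMonoidHom.toIntLinearMap n := by
      simp [map_smul]
    rw [h]
    exact Submodule.subset_span ⟨r, g n, x, rfl⟩)

/-- Functoriality of the tensor product in the right (left-module) variable. -/
noncomputable def ncMap (N : Type u) [AddCommGroup N] [Module Rᵐᵒᵖ N]
    {X Y : Type u} [AddCommGroup X] [Module R X] [AddCommGroup Y] [Module R Y]
    (f : X →ₗ[R] Y) : NCTensor R N X →ₗ[ℤ] NCTensor R N Y :=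
  Submodule.mapQ _ _ (LinearMap.lTensor N f.toAddMonoidHom.toIntLinearMap :
      N ⊗[ℤ] X →ₗ[ℤ] N ⊗[ℤ] Y) (by
    rw [ncRel, Submodule.span_le]
    rintro _ ⟨r, n, x, rfl⟩
    show LinearMap.lTensor N f.toAddMonoidHom.toIntLinearMap
      ((op r • n) ⊗ₜ[ℤ] x - n ⊗ₜ[ℤ] (r • x)) ∈ ncRel R N Y
    simp only [SetLike.mem_coe, Submodule.mem_comap, map_sub, LinearMap.lTensor_tmul]
    have h : f.toAddMonoidHom.toIntLinearMap (r • x) =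
        r • f.toAddMonoidHom.toIntLinearMap x := by
      simp [map_smul]
    rw [h]
    exact Submodule.subset_span ⟨r, n, f x, rfl⟩)

lemma ncMap_mk (N : Type u) [AddCommGroup N] [Module Rᵐᵒᵖ N]
    {X Y : Type u} [AddCommGroup X] [Module R X] [AddCommGroup Y] [Module R Y]
    (f : X →ₗ[R] Y) (w : N ⊗[ℤ] X) :
    ncMap R N f (Submodule.Quotient.mk w) =
      Submodule.Quotient.mk (LinearMap.lTensor N f.toAddMonoidHom.toIntLinearMap w) := by
  unfold ncMap
  exact Submodule.mapQ_apply (p := ncRel R N X) (q := ncRel R N Y) (LinearMap.lTensor N f.toAddMonoidHom.toIntLinearMap) w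

section lemmas

variable {R}
variable {X Y Z : Type u} [AddCommGroup X] [Module R X] [AddCommGroup Y] [Module R Y]
  [AddCommGroup Z] [Module R Z]

lemma toInt_id : ((LinearMap.id : X →ₗ[R] X).toAddMonoidHom).toIntLinearMap =
    (LinearMap.id : X →ₗ[ℤ] X) := rfl

lemma toInt_comp (f : X →ₗ[R] Y) (g : Y →ₗ[R] Z) :
    ((g ∘ₗ f).toAddMonoidHom).toIntLinearMap =
      g.toAddMonoidHom.toIntLinearMap ∘ₗ f.toAddMonoidHom.toIntLinearMap := rfl

lemma toInt_add (f g : X →ₗ[R] Y) :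
    ((f + g).toAddMonoidHom).toIntLinearMap =
      f.toAddMonoidHom.toIntLinearMap + g.toAddMonoidHom.toIntLinearMap := rfl

end lemmas

/-- The functor `N ⊗[R] - : R-Mod ⥤ Ab` for a right `R`-module `N`. -/
noncomputable def ncTensorFunctor (N : Type u) [AddCommGroup N] [Module Rᵐᵒᵖ N] :
    ModuleCat.{u} R ⥤ ModuleCat.{u} ℤ where
  obj X := ModuleCat.of ℤ (NCTensor R N X)
  map {X Y} f := ModuleCat.ofHom (ncMap R N f.hom)
  map_id X := by
    refine ModuleCat.hom_ext (LinearMap.ext fun z => ?_)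
    obtain ⟨w, rfl⟩ := Submodule.Quotient.mk_surjective _ z
    show ncMap R N (LinearMap.id : X →ₗ[R] X) _ = _
    rw [ncMap_mk, toInt_id, LinearMap.lTensor_id]
    rfl
  map_comp {X Y Z} f g := by
    refine ModuleCat.hom_ext (LinearMap.ext fun z => ?_)
    obtain ⟨w, rfl⟩ := Submodule.Quotient.mk_surjective _ z
    show ncMap R N (g.hom ∘ₗ f.hom) (Submodule.Quotient.mk w) = ncMap R N g.hom (ncMap R N f.hom (Submodule.Quotient.mk w))
    rw [ncMap_mk, ncMap_mk, ncMap_mk, toInt_comp, LinearMap.lTensor_comp]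
    rfl

instance ncTensorFunctor_additive (N : Type u) [AddCommGroup N] [Module Rᵐᵒᵖ N] :
    (ncTensorFunctor R N).Additive where
  map_add {X Y f g} := by
    refine ModuleCat.hom_ext (LinearMap.ext fun z => ?_)
    obtain ⟨w, rfl⟩ := Submodule.Quotient.mk_surjective _ z
    show ncMap R N (f.hom + g.hom) (Submodule.Quotient.mk w) = ncMap R N f.hom (Submodule.Quotient.mk w) + ncMap R N g.hom (Submodule.Quotient.mk w)
    rw [ncMap_mk, ncMap_mk, ncMap_mk, toInt_add, LinearMap.lTensor_add]
    rfl

/-- `Tor₁^R(N, Z)` for a right `R`-module `N` and a left `R`-module `Z`, defined as the value at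
`Z` of the first left derived functor of the functor `N ⊗[R] -`. -/
noncomputable def ncTor1 (N : Type u) [AddCommGroup N] [Module Rᵐᵒᵖ N]
    (Z : Type u) [AddCommGroup Z] [Module R Z] : ModuleCat.{u} ℤ :=
  (((ncTensorFunctor R N).leftDerived 1).obj (ModuleCat.of R Z))

/-- `Tor₁^R(N, Z) = 0`. -/
def Tor1IsZero (N : Type u) [AddCommGroup N] [Module Rᵐᵒᵖ N]
    (Z : Type u) [AddCommGroup Z] [Module R Z] : Prop :=
  Limits.IsZero (ncTor1 R N Z)

/-- `Ext¹_R(Z, T) = 0`, where `Ext` is the derived functor of `Hom` on the category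
of left `R`-modules. -/
def Ext1IsZero (Z T : Type u) [AddCommGroup Z] [Module R Z] [AddCommGroup T] [Module R T] :
    Prop :=
  Limits.IsZero ((((Ext ℤ (ModuleCat.{u} R) 1).obj (Opposite.op (ModuleCat.of R Z))).obj
    (ModuleCat.of R T)))

end NC

open MulOpposite


section Char

variable (R : Type u) [Ring R]

/-- The right `R`-module structure on the character module `A⁺ = Hom_ℤ(A, ℚ/ℤ)` of a left
`R`-module `A`, given by `(c • r) (a) = c (r • a)`. -/
instance charModuleRight (A : Type u) [AddCommGroup A] [Module R A] :
    Module Rᵐᵒᵖ (CharacterModule A) where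
  smul r c := (c.comp (DistribMulAction.toAddMonoidHom A r.unop) : A →+ _)
  one_smul c := DFunLike.ext _ _ fun a => congrArg c (one_smul R a)
  mul_smul r s c := DFunLike.ext _ _ fun a => congrArg c (mul_smul s.unop r.unop a)
  smul_zero r := rfl
  smul_add r c c' := rfl
  add_smul r s c := DFunLike.ext _ _ fun a => by
    show c ((r.unop + s.unop) • a) = c (r.unop • a) + c (s.unop • a)
    rw [add_smul, map_add]
  zero_smul c := DFunLike.ext _ _ fun a => by
    show c ((0 : R) • a) = 0
    rw [zero_smul, map_zero]

/-- The left `R`-module structure on the character module `N⁺ = Hom_ℤ(N, ℚ/ℤ)` of a right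
`R`-module `N`, given by `(r • c) (n) = c (n • r)`. -/
instance charModuleLeft (N : Type u) [AddCommGroup N] [Module Rᵐᵒᵖ N] :
    Module R (CharacterModule N) where
  smul r c := (c.comp (DistribMulAction.toAddMonoidHom N (op r)) : N →+ _)
  one_smul c := DFunLike.ext _ _ fun n => congrArg c (one_smul Rᵐᵒᵖ n)
  mul_smul r s c := DFunLike.ext _ _ fun n => congrArg c (mul_smul (op s) (op r) n)
  smul_zero r := rfl
  smul_add r c c' := rfl
  add_smul r s c := DFunLike.ext _ _ fun n => by
    show c ((op r + op s) • n) = c (op r • n) + c (op s • n)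
    rw [add_smul, map_add]
  zero_smul c := DFunLike.ext _ _ fun n => by
    show c ((0 : Rᵐᵒᵖ) • n) = 0
    rw [zero_smul, map_zero]

end Char

section Classes

variable (R : Type u) [Ring R] (M : Type u) [AddCommGroup M] [Module R M]

/-- `T` is `M`-`𝒜`-injective if, for every `A ∈ 𝒜`, every homomorphism `A → T` extends to `M`,
i.e. the restriction map `Hom(M, T) → Hom(A, T)` is surjective. -/
def MAInjective (𝒜 : Set (Submodule R M)) (T : Type u) [AddCommGroup T] [Module R T] : Prop :=
  ∀ A ∈ 𝒜, ∀ f : (↥A) →ₗ[R] T, ∃ g : M →ₗ[R] T, g ∘ₗ A.subtype = f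

/-- `T` is strongly `M`-`𝒜`-injective if `Ext¹_R(M/A, T) = 0` for all `A ∈ 𝒜`. -/
def SMAInjective (𝒜 : Set (Submodule R M)) (T : Type u) [AddCommGroup T] [Module R T] : Prop :=
  ∀ A ∈ 𝒜, Ext1IsZero R (M ⧸ A) T

/-- A right `R`-module `N` is `M`-`𝒜`-flat if `N ⊗ A → N ⊗ M` is injective for all `A ∈ 𝒜`. -/
def MAFlat (𝒜 : Set (Submodule R M)) (N : Type u) [AddCommGroup N] [Module Rᵐᵒᵖ N] : Prop :=
  ∀ A ∈ 𝒜, Function.Injective (ncMap R N A.subtype)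

/-- A right `R`-module `N` is strongly `M`-`𝒜`-flat if `Tor₁^R(N, M/A) = 0` for all `A ∈ 𝒜`. -/
def SMAFlat (𝒜 : Set (Submodule R M)) (N : Type u) [AddCommGroup N] [Module Rᵐᵒᵖ N] : Prop :=
  ∀ A ∈ 𝒜, Tor1IsZero R N (M ⧸ A)

end Classes

section Flat

variable (R : Type u) [Ring R]

/-- A left `R`-module `Z` is flat if tensoring with it preserves injectivity of morphisms of
right `R`-modules. -/
def FlatLeftModule (Z : Type u) [AddCommGroup Z] [Module R Z] : Prop :=
  ∀ (N N' : Type u) [AddCommGroup N] [Module Rᵐᵒᵖ N] [AddCommGroup N'] [Module Rᵐᵒᵖ N']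
    (g : N' →ₗ[Rᵐᵒᵖ] N), Function.Injective g → Function.Injective (ncMapL R g Z)

end Flat

/-! Over a left coherent ring every finitely presented module `Z`, in particular `M ⧸ A`, has a
resolution `R^k → R^m → R^n → Z → 0` by finite free modules. Tensoring it with `N` identifies
`Tor₁(N, Z)` with the homology of `N^k → N^m → N^n`, where the maps are given by the matrices of
the resolution. These matrix maps commute with direct products, and a product of exact sequences
of abelian groups is exact, so `Tor₁(∏ Gᵢ, Z) = 0` once every `Tor₁(Gᵢ, Z) = 0`. -/

def IsLeftCoherent (R : Type u) [Ring R] : Prop :=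
  ∀ I : Submodule R R, I.FG → Module.FinitePresentation R I

namespace IsLeftCoherent

variable {R : Type u} [Ring R]

theorem finitePresentation_of_fg (hR : IsLeftCoherent R) {n : ℕ}
    (N : Submodule R (Fin n → R)) (hN : N.FG) : Module.FinitePresentation R N := by
  induction n with
  | zero => infer_instance
  | succ n ih =>
    -- `0 → ker l → N → l(N) → 0` for the last coordinate `l`: here `l(N)` is a finitely generated
    -- left ideal, and `ker l` embeds into `R^n` by forgetting its vanishing last coordinate.
    have : Module.Finite R N := Module.Finite.iff_fg.mpr hN
    let last : (Fin (n + 1) → R) →ₗ[R] R := LinearMap.proj (Fin.last n)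
    have : Module.FinitePresentation R (N.map last) := hR _ (hN.map last)
    let l : N →ₗ[R] N.map last := last.restrict fun x hx ↦ Submodule.mem_map_of_mem hx
    have hl : Function.Surjective l := by
      rintro ⟨_, x, hx, rfl⟩
      exact ⟨⟨x, hx⟩, rfl⟩
    have : Module.Finite R (LinearMap.ker l) :=
      Module.Finite.iff_fg.mpr (Module.FinitePresentation.fg_ker l hl)
    let g : LinearMap.ker l →ₗ[R] (Fin n → R) :=
      LinearMap.funLeft R R Fin.castSucc ∘ₗ N.subtype ∘ₗ (LinearMap.ker l).subtype
    have hg : Function.Injective g := by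
      intro x y hxy
      ext j
      cases j using Fin.lastCases with
      | last => exact (congrArg Subtype.val x.2).trans (congrArg Subtype.val y.2).symm
      | cast j => exact congrFun hxy j
    have : Module.FinitePresentation R (LinearMap.range g) := ih _ (Submodule.fg_range g)
    have : Module.FinitePresentation R (LinearMap.ker l) :=
      Module.FinitePresentation.of_equiv (N := LinearMap.ker l) (LinearEquiv.ofInjective g hg).symm
    exact Module.finitePresentation_of_ker l hl

theorem exists_free_resolution (hR : IsLeftCoherent R) (Z : Type u) [AddCommGroup Z]
    [Module R Z] [Module.FinitePresentation R Z] :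
    ∃ (n m k : ℕ) (p : (Fin n → R) →ₗ[R] Z) (d₁ : (Fin m → R) →ₗ[R] (Fin n → R))
      (d₂ : (Fin k → R) →ₗ[R] (Fin m → R)),
      Function.Surjective p ∧ Function.Exact d₁ p ∧ Function.Exact d₂ d₁ := by
  obtain ⟨n, p, hp⟩ := Module.Finite.exists_fin' R Z
  have := hR.finitePresentation_of_fg _ (Module.FinitePresentation.fg_ker p hp)
  obtain ⟨m, k, q, d₂, hq, hd₂⟩ := Module.FinitePresentation.exists_fin' R (LinearMap.ker p)
  refine ⟨n, m, k, p, (LinearMap.ker p).subtype ∘ₗ q, d₂, hp, ?_, ?_⟩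
  · exact (hq.comp_exact_iff_exact).mpr (LinearMap.exact_subtype_ker_map p)
  · exact ((LinearMap.ker p).injective_subtype.comp_exact_iff_exact).mpr hd₂

end IsLeftCoherent

namespace CategoryTheory.ProjectiveResolution

open Limits

variable {C : Type*} [Category C] [Abelian C] [EnoughProjectives C]
  {P₀ P₁ P₂ : C} (d₁ : P₁ ⟶ P₀) (d₂ : P₂ ⟶ P₁) (w₂ : d₂ ≫ d₁ = 0)

noncomputable def syzygyStep (S : ShortComplex C) : Σ' (X : C) (d : X ⟶ S.X₁), d ≫ S.f = 0 :=
  ⟨Projective.syzygies S.f, Projective.d S.f,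
    (Category.assoc _ _ _).trans (by rw [kernel.condition]; exact comp_zero)⟩

noncomputable def complexOfExact : ChainComplex C ℕ :=
  ChainComplex.mk P₀ P₁ P₂ d₁ d₂ w₂ syzygyStep

@[simp] lemma complexOfExact_d_1_0 : (complexOfExact d₁ d₂ w₂).d 1 0 = d₁ := by
  simp [complexOfExact]

@[simp] lemma complexOfExact_d_2_1 : (complexOfExact d₁ d₂ w₂).d 2 1 = d₂ := by
  simp [complexOfExact]

instance [Projective P₀] [Projective P₁] [Projective P₂] (n : ℕ) :
    Projective ((complexOfExact d₁ d₂ w₂).X n) := by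
  obtain (_ | _ | _ | n) := n
  · exact ‹Projective P₀›
  · exact ‹Projective P₁›
  · exact ‹Projective P₂›
  · dsimp [complexOfExact, ChainComplex.mk, ChainComplex.mkAux, syzygyStep]
    infer_instance

lemma complexOfExact_exactAt_succ (h₂ : (ShortComplex.mk d₂ d₁ w₂).Exact) (n : ℕ) :
    (complexOfExact d₁ d₂ w₂).ExactAt (n + 1) := by
  rw [HomologicalComplex.exactAt_iff' _ (n + 1 + 1) (n + 1) n (by simp) (by simp)]
  match n with
  | 0 =>
    refine ShortComplex.exact_of_iso ?_ h₂
    refine ShortComplex.isoMk (Iso.refl _) (Iso.refl _) (Iso.refl _) ?_ ?_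
    · erw [Category.id_comp, Category.comp_id]
      exact complexOfExact_d_2_1 d₁ d₂ w₂
    · erw [Category.id_comp, Category.comp_id]
      exact complexOfExact_d_1_0 d₁ d₂ w₂
  | n + 1 =>
    refine ShortComplex.exact_of_iso ?_
      (exact_d_f ((complexOfExact d₁ d₂ w₂).d (n + 2) (n + 1)))
    refine ShortComplex.isoMk (ChainComplex.mkXIso P₀ P₁ P₂ d₁ d₂ w₂ syzygyStep n).symm
      (Iso.refl _) (Iso.refl _) ?_ ?_
    · erw [Category.comp_id, Iso.symm_hom]
      show _ ≫ (ChainComplex.mk P₀ P₁ P₂ d₁ d₂ w₂ syzygyStep).d (n + 3) (n + 2) = _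
      rw [ChainComplex.mk_d]
      exact Iso.inv_hom_id_assoc _ _
    · erw [Category.id_comp, Category.comp_id]
      rfl

noncomputable def ofExact {Z : C} (p : P₀ ⟶ Z) (w₁ : d₁ ≫ p = 0) [Epi p]
    [Projective P₀] [Projective P₁] [Projective P₂]
    (h₁ : (ShortComplex.mk d₁ p w₁).Exact) (h₂ : (ShortComplex.mk d₂ d₁ w₂).Exact) :
    ProjectiveResolution Z where
  complex := complexOfExact d₁ d₂ w₂
  π := (ChainComplex.toSingle₀Equiv _ _).symm ⟨p, by rw [complexOfExact_d_1_0]; exact w₁⟩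
  quasiIso := ⟨fun n ↦ by
    cases n with
    | zero =>
      rw [ChainComplex.quasiIsoAt₀_iff, ShortComplex.quasiIso_iff_of_zeros']
      · refine (ShortComplex.exact_and_epi_g_iff_of_iso ?_).2 ⟨h₁, ‹Epi p›⟩
        refine ShortComplex.isoMk (Iso.refl _) (Iso.refl _) (Iso.refl _) ?_ ?_
        · erw [Category.id_comp, Category.comp_id]
          exact (complexOfExact_d_1_0 d₁ d₂ w₂).symm
        · erw [Category.id_comp, Category.comp_id]
          exact (ChainComplex.toSingle₀Equiv_symm_apply_f_zero
            (C := complexOfExact d₁ d₂ w₂) p _).symm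
      all_goals rfl
    | succ n =>
      rw [quasiIsoAt_iff_exactAt']
      · exact complexOfExact_exactAt_succ d₁ d₂ w₂ h₂ n
      · apply ChainComplex.exactAt_succ_single_obj⟩

end CategoryTheory.ProjectiveResolution

section Tor

variable {R : Type u} [Ring R] {Z P₀ P₁ P₂ : Type u} [AddCommGroup Z] [Module R Z]
  [AddCommGroup P₀] [Module R P₀] [AddCommGroup P₁] [Module R P₁] [AddCommGroup P₂] [Module R P₂]

theorem tor1IsZero_iff_exact [Module.Projective R P₀] [Module.Projective R P₁]
    [Module.Projective R P₂] {p : P₀ →ₗ[R] Z} {d₁ : P₁ →ₗ[R] P₀} {d₂ : P₂ →ₗ[R] P₁}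
    (hp : Function.Surjective p) (h₁ : Function.Exact d₁ p) (h₂ : Function.Exact d₂ d₁)
    (N : Type u) [AddCommGroup N] [Module Rᵐᵒᵖ N] :
    Tor1IsZero R N Z ↔ Function.Exact (ncMap R N d₂) (ncMap R N d₁) := by
  have : Projective (ModuleCat.of R P₀) := (IsProjective.iff_projective P₀).mp ‹_›
  have : Projective (ModuleCat.of R P₁) := (IsProjective.iff_projective P₁).mp ‹_›
  have : Projective (ModuleCat.of R P₂) := (IsProjective.iff_projective P₂).mp ‹_›
  have : Epi (ModuleCat.ofHom p) := (ModuleCat.epi_iff_surjective _).mpr hp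
  have w₁ : ModuleCat.ofHom d₁ ≫ ModuleCat.ofHom p = 0 :=
    ModuleCat.hom_ext (LinearMap.ext h₁.apply_apply_eq_zero)
  have w₂ : ModuleCat.ofHom d₂ ≫ ModuleCat.ofHom d₁ = 0 :=
    ModuleCat.hom_ext (LinearMap.ext h₂.apply_apply_eq_zero)
  let P := ProjectiveResolution.ofExact _ _ w₂ _ w₁
    ((ShortComplex.ShortExact.moduleCat_exact_iff_function_exact _).mpr h₁)
    ((ShortComplex.ShortExact.moduleCat_exact_iff_function_exact _).mpr h₂)
  rw [Tor1IsZero, ncTor1, (P.isoLeftDerivedObj (ncTensorFunctor R N) 1).isZero_iff,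
    HomologicalComplex.homologyFunctor_obj, ← HomologicalComplex.exactAt_iff_isZero_homology,
    HomologicalComplex.exactAt_iff' _ 2 1 0 (by simp) (by simp),
    ShortComplex.ShortExact.moduleCat_exact_iff_function_exact]
  rfl

end Tor

section FinFree

variable {R : Type u} [Ring R]

lemma LinearMap.apply_eq_sum_smul_single {M : Type*} [AddCommGroup M] [Module R M] {n : ℕ}
    (f : (Fin n → R) →ₗ[R] M) (x : Fin n → R) : f x = ∑ k, x k • f (Pi.single k 1) := by
  conv_lhs => rw [← Finset.univ_sum_single x]
  simp [← map_smul, ← Pi.single_smul']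

noncomputable def matrixMap (N : Type*) [AddCommGroup N] [Module Rᵐᵒᵖ N] {a b : ℕ}
    (f : (Fin a → R) →ₗ[R] (Fin b → R)) : (Fin a → N) →ₗ[ℤ] (Fin b → N) where
  toFun v j := ∑ k, op (f (Pi.single k 1) j) • v k
  map_add' v w := by ext j; simp [smul_add, Finset.sum_add_distrib]
  map_smul' c v := by ext j; simp [Finset.smul_sum, smul_comm c]

variable (N : Type u) [AddCommGroup N] [Module Rᵐᵒᵖ N]

lemma ncTensor_mk_op_smul_tmul {X : Type u} [AddCommGroup X] [Module R X] (r : R) (m : N)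
    (x : X) : (Submodule.Quotient.mk ((op r • m) ⊗ₜ[ℤ] x) : NCTensor R N X) =
      Submodule.Quotient.mk (m ⊗ₜ[ℤ] (r • x)) :=
  (Submodule.Quotient.eq _).mpr (Submodule.subset_span ⟨r, m, x, rfl⟩)

noncomputable def ncTensorFinToPi (n : ℕ) : NCTensor R N (Fin n → R) →ₗ[ℤ] (Fin n → N) :=
  (ncRel R N (Fin n → R)).liftQ
    (TensorProduct.lift (LinearMap.mk₂ ℤ (fun m x j ↦ op (x j) • m)
      (fun m m' x ↦ by ext j; simp [smul_add])
      (fun c m x ↦ by ext j; exact smul_comm _ c m)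
      (fun m x x' ↦ by ext j; simp [add_smul])
      (fun c m x ↦ by ext j; simp only [Pi.smul_apply, op_smul, smul_assoc])))
    (by
      rw [ncRel, Submodule.span_le]
      rintro _ ⟨r, m, x, rfl⟩
      ext j
      -- `ncRel` lives in `N ⊗[ℤ] X` with `AddCommGroup.toIntModule`, not with the tensor
      -- product's own `ℤ`-module structure, so the linear-map lemmas only apply up to defeq
      erw [map_sub, TensorProduct.lift.tmul, TensorProduct.lift.tmul]
      simp [mul_smul])

@[simp] lemma ncTensorFinToPi_mk_tmul (n : ℕ) (m : N) (x : Fin n → R) :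
    ncTensorFinToPi N n (Submodule.Quotient.mk (m ⊗ₜ[ℤ] x)) = fun j ↦ op (x j) • m :=
  rfl

noncomputable def piToNCTensorFin (n : ℕ) : (Fin n → N) →ₗ[ℤ] NCTensor R N (Fin n → R) :=
  ∑ j, (ncRel R N (Fin n → R)).mkQ ∘ₗ (TensorProduct.mk ℤ N (Fin n → R)).flip (Pi.single j 1) ∘ₗ
    LinearMap.proj j

lemma piToNCTensorFin_apply (n : ℕ) (v : Fin n → N) :
    piToNCTensorFin N n v = ∑ j, Submodule.Quotient.mk (v j ⊗ₜ[ℤ] (Pi.single j 1 : Fin n → R)) := by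
  simp only [piToNCTensorFin, LinearMap.sum_apply]
  rfl

noncomputable def ncTensorFinEquiv (n : ℕ) : NCTensor R N (Fin n → R) ≃ₗ[ℤ] (Fin n → N) :=
  .ofLinearMap (ncTensorFinToPi N n) (piToNCTensorFin N n)
    (by
      ext i a j
      by_cases h : j = i <;> simp [piToNCTensorFin_apply, Pi.single_apply, h])
    (by
      refine Submodule.linearMap_qext _ (TensorProduct.ext' fun m x ↦ ?_)
      change piToNCTensorFin N n (ncTensorFinToPi N n (Submodule.Quotient.mk (m ⊗ₜ[ℤ] x))) =
        Submodule.Quotient.mk (m ⊗ₜ[ℤ] x)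
      simp only [ncTensorFinToPi_mk_tmul, piToNCTensorFin_apply, ncTensor_mk_op_smul_tmul]
      simp only [← Submodule.mkQ_apply]
      rw [← map_sum, ← TensorProduct.tmul_sum]
      congr 2
      ext i
      simp [Pi.single_apply])

lemma matrixMap_comp_ncTensorFinEquiv {a b : ℕ} (f : (Fin a → R) →ₗ[R] (Fin b → R)) :
    matrixMap N f ∘ₗ (ncTensorFinEquiv N a).toLinearMap =
      (ncTensorFinEquiv N b).toLinearMap ∘ₗ ncMap R N f := by
  refine Submodule.linearMap_qext _ (TensorProduct.ext' fun m x ↦ ?_)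
  change matrixMap N f (ncTensorFinToPi N a (Submodule.Quotient.mk (m ⊗ₜ[ℤ] x))) =
    ncTensorFinToPi N b (ncMap R N f (Submodule.Quotient.mk (m ⊗ₜ[ℤ] x)))
  rw [ncMap_mk, LinearMap.lTensor_tmul]
  ext j
  simp [matrixMap, f.apply_eq_sum_smul_single x, Finset.sum_smul, mul_smul]

theorem exact_ncMap_iff_exact_matrixMap {a b c : ℕ} (g : (Fin a → R) →ₗ[R] (Fin b → R))
    (f : (Fin b → R) →ₗ[R] (Fin c → R)) :
    Function.Exact (ncMap R N g) (ncMap R N f) ↔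
      Function.Exact (matrixMap N g) (matrixMap N f) :=
  (Function.Exact.iff_of_ladder_linearEquiv (matrixMap_comp_ncTensorFinEquiv N g)
    (matrixMap_comp_ncTensorFinEquiv N f)).symm

lemma matrixMap_pi_apply {ι : Type*} (G : ι → Type*) [∀ i, AddCommGroup (G i)]
    [∀ i, Module Rᵐᵒᵖ (G i)] {a b : ℕ} (f : (Fin a → R) →ₗ[R] (Fin b → R))
    (v : Fin a → ∀ i, G i) (j : Fin b) (i : ι) :
    matrixMap (∀ i, G i) f v j i = matrixMap (G i) f (fun k ↦ v k i) j := by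
  simp [matrixMap, Finset.sum_apply]

theorem exact_matrixMap_pi {ι : Type*} (G : ι → Type*) [∀ i, AddCommGroup (G i)]
    [∀ i, Module Rᵐᵒᵖ (G i)] {a b c : ℕ} (g : (Fin a → R) →ₗ[R] (Fin b → R))
    (f : (Fin b → R) →ₗ[R] (Fin c → R))
    (h : ∀ i, Function.Exact (matrixMap (G i) g) (matrixMap (G i) f)) :
    Function.Exact (matrixMap (∀ i, G i) g) (matrixMap (∀ i, G i) f) := by
  intro v
  constructor
  · intro hv
    have : ∀ i, ∃ w, matrixMap (G i) g w = fun k ↦ v k i := fun i ↦ (h i _).mp <| by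
      ext j
      rw [← matrixMap_pi_apply, hv]
      rfl
    choose w hw using this
    exact ⟨fun k i ↦ w i k, by ext j i; rw [matrixMap_pi_apply]; exact congrFun (hw i) j⟩
  · rintro ⟨w, rfl⟩
    ext j i
    simp only [matrixMap_pi_apply]
    exact congrFun ((h i).apply_apply_eq_zero fun k ↦ w k i) j

end FinFree

/-- Let `R` be a left coherent ring (every finitely generated left ideal is finitely presented)
and let `M` be a finitely presented left `R`-module that is `𝒜`-coherent (every `A ∈ 𝒜` is
finitely presented). Then any direct product of strongly `M`-`𝒜`-flat right `R`-modules is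
strongly `M`-`𝒜`-flat. -/
theorem stmt14 (R : Type u) [Ring R]
    (hcoh : ∀ I : Submodule R R, I.FG → Module.FinitePresentation R I)
    (M : Type u) [AddCommGroup M] [Module R M]
    (𝒜 : Set (Submodule R M)) [Module.FinitePresentation R M]
    (h𝒜 : ∀ A ∈ 𝒜, Module.FinitePresentation R A)
    (ι : Type u) (G : ι → Type u) [∀ i, AddCommGroup (G i)] [∀ i, Module Rᵐᵒᵖ (G i)]
    (h : ∀ i, SMAFlat R M 𝒜 (G i)) :
    SMAFlat R M 𝒜 (∀ i, G i) := by
  intro A hA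
  have : Module.FinitePresentation R (M ⧸ A) :=
    Module.finitePresentation_of_surjective A.mkQ A.mkQ_surjective <| by
      rw [Submodule.ker_mkQ, ← Module.Finite.iff_fg]
      have := h𝒜 A hA
      infer_instance
  obtain ⟨n, m, k, p, d₁, d₂, hp, h₁, h₂⟩ := IsLeftCoherent.exists_free_resolution hcoh (M ⧸ A)
  have hG (i : ι) : Function.Exact (matrixMap (G i) d₂) (matrixMap (G i) d₁) :=
    (exact_ncMap_iff_exact_matrixMap (G i) d₂ d₁).mp
      ((tor1IsZero_iff_exact hp h₁ h₂ (G i)).mp (h i A hA))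
  rw [tor1IsZero_iff_exact hp h₁ h₂, exact_ncMap_iff_exact_matrixMap]
  exact exact_matrixMap_pi G d₂ d₁ hG
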